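/- arXiv:math-ph/0210036 — 3 statements merged into one kernel-verified Lean document; each statement's English description precedes it below -/
import Mathlib

section
/- For density matrices (positive semidefinite matrices of trace one) γ and ω on a finite-dimensional complex inner product space, with ω positive definite, for every Hermitian matrix h and every δ > 0, one has Tr(γ h) ≤ δ⁻¹ log Tr(exp(δ h + log ω)) + δ⁻¹ S(γ|ω), where S(γ|ω) = Tr(γ (log γ - log ω)) is the quantum relative entropy. -/
open Matrix
open scoped ComplexOrder

/-- Functional-calculus logarithm of a Hermitian matrix (junk value `0` otherwise). -/
noncomputable def matLog {n : ℕ} (A : Matrix (Fin n) (Fin n) ℂ) : Matrix (Fin n) (Fin n) ℂ :=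
  if hA : A.IsHermitian then
    (hA.eigenvectorUnitary : Matrix (Fin n) (Fin n) ℂ) *
      Matrix.diagonal (fun i => (Real.log (hA.eigenvalues i) : ℂ)) *
      star (hA.eigenvectorUnitary : Matrix (Fin n) (Fin n) ℂ)
  else 0

/-- `Tr(A log A)` via eigenvalues, with the convention `0 log 0 = 0`
(automatic since `Real.log 0 = 0`). -/
noncomputable def trXlogX {n : ℕ} (A : Matrix (Fin n) (Fin n) ℂ) : ℝ :=
  if hA : A.IsHermitian then ∑ i, hA.eigenvalues i * Real.log (hA.eigenvalues i) else 0

/-- A density matrix: positive semidefinite with unit trace. -/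
def IsDensityMatrix {n : ℕ} (A : Matrix (Fin n) (Fin n) ℂ) : Prop :=
  A.PosSemidef ∧ A.trace = 1

/-- Quantum relative entropy `S(γ|ω) = Tr(γ log γ) - Tr(γ log ω)`. -/
noncomputable def relEntropy {n : ℕ} (γ ω : Matrix (Fin n) (Fin n) ℂ) : ℝ :=
  trXlogX γ - ((γ * matLog ω).trace).re

/-!
Diagonalise `γ = ∑ pᵢ |uᵢ⟩⟨uᵢ|` and `A = δh + log ω = ∑ lⱼ |vⱼ⟩⟨vⱼ|`. Then
`Tr(γA) = ∑ᵢⱼ cᵢⱼ pᵢ lⱼ` with `cᵢⱼ = |⟨uᵢ, vⱼ⟩|²` doubly stochastic, `Tr e^A = ∑ e^{lⱼ}` and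
`Tr γ log γ = ∑ pᵢ log pᵢ`, so the Gibbs variational principle
`Tr(γA) ≤ log Tr e^A + Tr γ log γ` follows by averaging the scalar inequality
`t log s ≤ t log t + s - t` (at `t = pᵢ`, `s = e^{lⱼ} / ∑ e^{lₖ}`) against `c`.
Dividing by `δ` after splitting `Tr(γA) = δ Tr(γh) + Tr(γ log ω)` gives the claim.
-/

lemma Real.mul_log_le_mul_log_add_sub {t s : ℝ} (ht : 0 ≤ t) (hs : 0 < s) :
    t * Real.log s ≤ t * Real.log t + (s - t) := by
  rcases ht.eq_or_lt with rfl | ht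
  · simp [hs.le]
  · have h := mul_le_mul_of_nonneg_left (Real.log_le_sub_one_of_pos (div_pos hs ht)) ht.le
    rw [Real.log_div hs.ne' ht.ne'] at h
    field_simp at h
    linarith

namespace Matrix

variable {m : Type*} [Fintype m] [DecidableEq m]

lemma sum_sum_mul_le_log_sum_exp_add_sum_mul_log
    {c : Matrix m m ℝ} (hc : c ∈ doublyStochastic ℝ m) {p : m → ℝ} (hp : ∀ i, 0 ≤ p i)
    (hp1 : ∑ i, p i = 1) (l : m → ℝ) :
    ∑ i, ∑ j, c i j * (p i * l j) ≤
      Real.log (∑ j, Real.exp (l j)) + ∑ i, p i * Real.log (p i) := by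
  set Z := ∑ j, Real.exp (l j)
  have hZ : 0 < Z := Finset.sum_pos (fun j _ => Real.exp_pos _)
    (Finset.nonempty_of_sum_ne_zero (hp1.trans_ne one_ne_zero))
  have key : ∀ i j,
      p i * l j ≤ p i * Real.log (p i) + p i * Real.log Z + (Real.exp (l j) / Z - p i) := by
    intro i j
    have h := Real.mul_log_le_mul_log_add_sub (hp i) (div_pos (Real.exp_pos (l j)) hZ)
    rw [Real.log_div (Real.exp_pos _).ne' hZ.ne', Real.log_exp] at h
    linarith
  calc ∑ i, ∑ j, c i j * (p i * l j)
      ≤ ∑ i, ∑ j,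
          c i j * (p i * Real.log (p i) + p i * Real.log Z + (Real.exp (l j) / Z - p i)) :=
        Finset.sum_le_sum fun i _ => Finset.sum_le_sum fun j _ =>
          mul_le_mul_of_nonneg_left (key i j) (nonneg_of_mem_doublyStochastic hc)
    _ = ∑ i, (p i * Real.log (p i) + p i * Real.log Z) +
          (∑ j, Real.exp (l j) / Z - ∑ i, p i) := by
        simp only [mul_add, mul_sub, Finset.sum_add_distrib, Finset.sum_sub_distrib]
        rw [Finset.sum_comm (f := fun i j => c i j * (Real.exp (l j) / Z))]
        simp only [← Finset.sum_mul, sum_row_of_mem_doublyStochastic hc,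
          sum_col_of_mem_doublyStochastic hc, one_mul]
    _ = Real.log Z + ∑ i, p i * Real.log (p i) := by
        rw [Finset.sum_add_distrib, ← Finset.sum_mul, ← Finset.sum_div, hp1, div_self hZ.ne']
        ring

lemma map_normSq_mem_doublyStochastic {U : Matrix m m ℂ} (hU : U ∈ unitaryGroup m ℂ) :
    U.map Complex.normSq ∈ doublyStochastic ℝ m := by
  refine mem_doublyStochastic_iff_sum.mpr
    ⟨fun i j => Complex.normSq_nonneg _, fun i => ?_, fun j => ?_⟩
  · have h := congr_fun₂ (mem_unitaryGroup_iff.mp hU) i i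
    rw [mul_apply, one_apply_eq] at h
    have h' : ((∑ j, Complex.normSq (U i j) : ℝ) : ℂ) = 1 := by
      simpa [Complex.mul_conj] using h
    exact_mod_cast h'
  · have h := congr_fun₂ (mem_unitaryGroup_iff'.mp hU) j j
    rw [mul_apply, one_apply_eq] at h
    have h' : ((∑ i, Complex.normSq (U i j) : ℝ) : ℂ) = 1 := by
      simpa [Complex.conj_mul', Complex.normSq_eq_norm_sq] using h
    exact_mod_cast h'

lemma trace_diagonal_mul_mul_diagonal_mul_star (W : Matrix m m ℂ) (p l : m → ℝ) :
    (diagonal (RCLike.ofReal ∘ p) * W * diagonal (RCLike.ofReal ∘ l) * star W).trace =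
      ∑ i, ∑ j, ((Complex.normSq (W i j) * (p i * l j) : ℝ) : ℂ) := by
  refine Finset.sum_congr rfl fun i _ => ?_
  rw [diag_apply, mul_apply]
  refine Finset.sum_congr rfl fun j _ => ?_
  simp only [mul_diagonal, diagonal_mul, star_apply, Complex.star_def, Function.comp_apply,
    show (RCLike.ofReal : ℝ → ℂ) = Complex.ofReal from rfl]
  rw [Complex.ofReal_mul, Complex.normSq_eq_conj_mul_self]
  push_cast
  ring

lemma IsHermitian.exists_mem_doublyStochastic_re_trace_mul {A B : Matrix m m ℂ}
    (hA : A.IsHermitian) (hB : B.IsHermitian) :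
    ∃ c ∈ doublyStochastic ℝ m,
      (A * B).trace.re = ∑ i, ∑ j, c i j * (hA.eigenvalues i * hB.eigenvalues j) := by
  set V := (hA.eigenvectorUnitary : Matrix m m ℂ)
  set U := (hB.eigenvectorUnitary : Matrix m m ℂ)
  have hW : star V * U ∈ unitaryGroup m ℂ :=
    mul_mem (Unitary.star_mem hA.eigenvectorUnitary.2) hB.eigenvectorUnitary.2
  refine ⟨(star V * U).map Complex.normSq, map_normSq_mem_doublyStochastic hW, ?_⟩
  have hAB : (A * B).trace = (diagonal (RCLike.ofReal ∘ hA.eigenvalues) * (star V * U) *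
      diagonal (RCLike.ofReal ∘ hB.eigenvalues) * star (star V * U)).trace := by
    conv_lhs => rw [hA.spectral_theorem, hB.spectral_theorem]
    simp only [Unitary.conjStarAlgAut_apply, star_mul, star_star, Matrix.mul_assoc]
    rw [trace_mul_comm]
    simp only [Matrix.mul_assoc]
    rfl
  rw [hAB, trace_diagonal_mul_mul_diagonal_mul_star]
  simp only [Complex.re_sum, Complex.ofReal_re, map_apply]

open scoped Matrix.Norms.L2Operator in
lemma IsHermitian.trace_exp {A : Matrix m m ℂ} (hA : A.IsHermitian) :
    (NormedSpace.exp A).trace = ∑ i, (Real.exp (hA.eigenvalues i) : ℂ) := by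
  rw [← CFC.real_exp_eq_normedSpace_exp hA.isSelfAdjoint, hA.cfc_eq, IsHermitian.cfc,
    Unitary.conjStarAlgAut_apply, trace_mul_cycle, Unitary.coe_star_mul_self, one_mul,
    trace_diagonal]
  rfl

end Matrix

lemma matLog_eq_cfc {n : ℕ} {A : Matrix (Fin n) (Fin n) ℂ} (hA : A.IsHermitian) :
    matLog A = cfc Real.log A := by
  rw [matLog, dif_pos hA, hA.cfc_eq, IsHermitian.cfc, Unitary.conjStarAlgAut_apply]
  rfl

lemma isHermitian_matLog {n : ℕ} {A : Matrix (Fin n) (Fin n) ℂ} (hA : A.IsHermitian) :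
    (matLog A).IsHermitian :=
  matLog_eq_cfc hA ▸ cfc_predicate Real.log A

theorem re_trace_mul_le_log_re_trace_exp_add_trXlogX {n : ℕ} {γ A : Matrix (Fin n) (Fin n) ℂ}
    (hγ : IsDensityMatrix γ) (hA : A.IsHermitian) :
    (γ * A).trace.re ≤ Real.log (NormedSpace.exp A).trace.re + trXlogX γ := by
  obtain ⟨hγ, hγ1⟩ := hγ
  obtain ⟨c, hc, htr⟩ := hγ.isHermitian.exists_mem_doublyStochastic_re_trace_mul hA
  have hp1 : ∑ i, hγ.isHermitian.eigenvalues i = 1 := by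
    simpa [hγ1] using (congrArg Complex.re hγ.isHermitian.trace_eq_sum_eigenvalues).symm
  rw [htr, hA.trace_exp, ← Complex.ofReal_sum, Complex.ofReal_re, trXlogX,
    dif_pos hγ.isHermitian]
  exact sum_sum_mul_le_log_sum_exp_add_sum_mul_log hc hγ.eigenvalues_nonneg hp1 _

theorem entropy_inequality_general {n : ℕ} (γ ω h : Matrix (Fin n) (Fin n) ℂ)
    (hγ : IsDensityMatrix γ) (hωpd : ω.PosDef)
    (hh : h.IsHermitian) (δ : ℝ) (hδ : 0 < δ) :
    ((γ * h).trace).re ≤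
      δ⁻¹ * Real.log (((NormedSpace.exp (δ • h + matLog ω)).trace).re) +
        δ⁻¹ * relEntropy γ ω := by
  have hA : (δ • h + matLog ω).IsHermitian :=
    (hh.smul (IsSelfAdjoint.all δ)).add (isHermitian_matLog hωpd.isHermitian)
  have hgibbs := re_trace_mul_le_log_re_trace_exp_add_trXlogX hγ hA
  have hsplit : ((γ * (δ • h + matLog ω)).trace).re =
      δ * ((γ * h).trace).re + ((γ * matLog ω).trace).re := by
    rw [mul_add, trace_add, mul_smul_comm, trace_smul, Complex.add_re, Complex.smul_re,
      smul_eq_mul]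
  rw [relEntropy, ← mul_add, le_inv_mul_iff₀ hδ]
  linarith

/-- The quantum entropy inequality:
`Tr(γ h) ≤ δ⁻¹ log Tr e^{δh + log ω} + δ⁻¹ S(γ|ω)`. -/
theorem entropy_inequality {n : ℕ} (γ ω h : Matrix (Fin n) (Fin n) ℂ)
    (hγ : IsDensityMatrix γ) (hω : IsDensityMatrix ω) (hωpd : ω.PosDef)
    (hh : h.IsHermitian) (δ : ℝ) (hδ : 0 < δ) :
    ((γ * h).trace).re ≤
      δ⁻¹ * Real.log (((NormedSpace.exp (δ • h + matLog ω)).trace).re) +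
        δ⁻¹ * relEntropy γ ω :=
  entropy_inequality_general γ ω h hγ hωpd hh δ hδ
end

section
/- The Gibbs variational principle: for a Hermitian matrix H on a finite-dimensional complex inner product space, log Tr(e^H) = sup over density matrices γ of (Tr(γH) − Tr(γ log γ)), and the supremum is uniquely attained at γ = e^H / Tr(e^H). -/
open Matrix
open scoped ComplexOrder

/-!
Put `Z = Tr e^H` and `γ₀ = e^H / Z`. Then `log γ₀ = H - log Z`, so for every density matrix
`γ` we get `Tr(γ H) - Tr(γ log γ) = log Z - S(γ|γ₀)`, and the theorem is Klein's inequality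
`S(γ|ω) ≥ Tr γ - Tr ω`, with equality only at `γ = ω`.

For Klein's inequality let `p`, `q` be the eigenvalues of `γ`, `ω` and `W` the unitary overlap of
their eigenbases. Then `S(γ|ω) - Tr γ + Tr ω = ∑ |W j i|² q j klFun (p i / q j)`, because the
matrix `|W j i|²` is doubly stochastic. Every term is nonnegative, and the sum vanishes only if
`p i = q j` whenever `W j i ≠ 0`, i.e. `W diag p = diag q W`, which says `γ = ω`.
-/

open InformationTheory

lemma mul_klFun_div (p : ℝ) {q : ℝ} (hq : q ≠ 0) :
    q * klFun (p / q) = p * Real.log p - p * Real.log q - p + q := by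
  rcases eq_or_ne p 0 with rfl | hp
  · simp [klFun_zero]
  · rw [klFun_apply, Real.log_div hp hq]
    field_simp
    ring

section Unitary

variable {ι : Type*} [Fintype ι] [DecidableEq ι]

lemma sum_normSq_row_of_mem_unitaryGroup {W : Matrix ι ι ℂ} (hW : W ∈ unitaryGroup ι ℂ)
    (j : ι) : ∑ i, Complex.normSq (W j i) = 1 := by
  have h := congr_fun₂ (mem_unitaryGroup_iff.mp hW) j j
  simp only [mul_apply, one_apply_eq, star_apply, RCLike.star_def, Complex.mul_conj] at h
  exact_mod_cast h

lemma sum_normSq_col_of_mem_unitaryGroup {W : Matrix ι ι ℂ} (hW : W ∈ unitaryGroup ι ℂ)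
    (i : ι) : ∑ j, Complex.normSq (W j i) = 1 := by
  simpa using sum_normSq_row_of_mem_unitaryGroup (Unitary.star_mem hW) i

lemma trace_mul_diagonal_mul_star_mul_diagonal (W : Matrix ι ι ℂ) (a b : ι → ℝ) :
    (W * diagonal (fun i => (a i : ℂ)) * star W * diagonal (fun j => (b j : ℂ))).trace =
      ((∑ j, ∑ i, Complex.normSq (W j i) * (a i * b j) : ℝ) : ℂ) := by
  simp only [trace, diag, mul_diagonal]
  simp only [mul_apply (M := W * _), mul_diagonal, star_apply, Finset.sum_mul]
  push_cast
  refine Finset.sum_congr rfl fun j _ => Finset.sum_congr rfl fun i _ => ?_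
  rw [Complex.normSq_eq_conj_mul_self, RCLike.star_def]
  ring

end Unitary

namespace Matrix.IsHermitian

variable {ι : Type*} [Fintype ι] [DecidableEq ι] {A B : Matrix ι ι ℂ}
  (hA : A.IsHermitian) (hB : B.IsHermitian)

noncomputable def eigenbasisOverlap : Matrix ι ι ℂ :=
  star (hB.eigenvectorUnitary : Matrix ι ι ℂ) * hA.eigenvectorUnitary

lemma eigenbasisOverlap_mem_unitaryGroup : eigenbasisOverlap hA hB ∈ unitaryGroup ι ℂ :=
  mul_mem (Unitary.star_mem hB.eigenvectorUnitary.2) hA.eigenvectorUnitary.2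

lemma cfc_eq_mul_diagonal_mul_star (f : ℝ → ℝ) :
    hA.cfc f = (hA.eigenvectorUnitary : Matrix ι ι ℂ) *
      diagonal (fun i => (f (hA.eigenvalues i) : ℂ)) *
      star (hA.eigenvectorUnitary : Matrix ι ι ℂ) :=
  rfl

lemma trace_cfc (f : ℝ → ℝ) :
    (hA.cfc f).trace = ((∑ i, f (hA.eigenvalues i) : ℝ) : ℂ) := by
  rw [cfc_eq_mul_diagonal_mul_star, trace_mul_cycle, Unitary.coe_star_mul_self, Matrix.one_mul,
    trace_diagonal, Complex.ofReal_sum]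

lemma re_trace_eq_sum : A.trace.re = ∑ i, hA.eigenvalues i := by
  rw [hA.trace_eq_sum_eigenvalues, Complex.re_sum]
  simp only [Complex.coe_algebraMap, Complex.ofReal_re]

lemma trace_cfc_mul_cfc (f g : ℝ → ℝ) :
    (hA.cfc f * hB.cfc g).trace = ((∑ j, ∑ i, Complex.normSq (eigenbasisOverlap hA hB j i) *
      (f (hA.eigenvalues i) * g (hB.eigenvalues j)) : ℝ) : ℂ) := by
  rw [← trace_mul_diagonal_mul_star_mul_diagonal, eigenbasisOverlap, star_mul, star_star,
    cfc_eq_mul_diagonal_mul_star, cfc_eq_mul_diagonal_mul_star]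
  simp only [Matrix.mul_assoc]
  rw [trace_mul_comm (star (hB.eigenvectorUnitary : Matrix ι ι ℂ))]
  simp only [Matrix.mul_assoc]

lemma eq_of_eigenvalues_eq_of_eigenbasisOverlap_ne_zero
    (h : ∀ j i, eigenbasisOverlap hA hB j i ≠ 0 → hA.eigenvalues i = hB.eigenvalues j) :
    A = B := by
  have hU : (hA.eigenvectorUnitary : Matrix ι ι ℂ) =
      hB.eigenvectorUnitary * eigenbasisOverlap hA hB := by
    rw [eigenbasisOverlap, ← Matrix.mul_assoc,
      Unitary.mul_star_self_of_mem hB.eigenvectorUnitary.2, Matrix.one_mul]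
  have hWU : eigenbasisOverlap hA hB * star (hA.eigenvectorUnitary : Matrix ι ι ℂ) =
      star (hB.eigenvectorUnitary : Matrix ι ι ℂ) := by
    rw [eigenbasisOverlap, Matrix.mul_assoc,
      Unitary.mul_star_self_of_mem hA.eigenvectorUnitary.2, Matrix.mul_one]
  have hW : eigenbasisOverlap hA hB * diagonal (fun i => (hA.eigenvalues i : ℂ)) =
      diagonal (fun j => (hB.eigenvalues j : ℂ)) * eigenbasisOverlap hA hB := by
    ext j i
    rw [mul_diagonal, diagonal_mul]
    by_cases hji : eigenbasisOverlap hA hB j i = 0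
    · simp [hji]
    · rw [h j i hji, mul_comm]
  calc A = hA.cfc id := hA.spectral_theorem
    _ = hB.eigenvectorUnitary * (eigenbasisOverlap hA hB *
          diagonal (fun i => (hA.eigenvalues i : ℂ))) *
          star (hA.eigenvectorUnitary : Matrix ι ι ℂ) := by
      rw [cfc_eq_mul_diagonal_mul_star]
      nth_rw 1 [hU]
      simp only [Matrix.mul_assoc]
      rfl
    _ = hB.cfc id := by
      rw [hW, cfc_eq_mul_diagonal_mul_star, ← hWU]
      simp only [Matrix.mul_assoc]
      rfl
    _ = B := hB.spectral_theorem.symm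

lemma exp_eq_cfc : NormedSpace.exp A = hA.cfc Real.exp := by
  have hexp : NormedSpace.exp (RCLike.ofReal ∘ hA.eigenvalues : ι → ℂ) =
      RCLike.ofReal ∘ Real.exp ∘ hA.eigenvalues := by
    funext i
    simp [Pi.coe_exp, ← Complex.exp_eq_exp_ℂ, Complex.ofReal_exp]
  conv_lhs => rw [hA.spectral_theorem, Unitary.conjStarAlgAut_apply]
  refine (Matrix.exp_units_conj (Unitary.toUnits hA.eigenvectorUnitary) _).trans ?_
  rw [exp_diagonal, hexp]
  rfl

end Matrix.IsHermitian

section Klein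

variable {n : ℕ} {γ ω : Matrix (Fin n) (Fin n) ℂ}

lemma matLog_eq_cfc_s2 (hω : ω.IsHermitian) : matLog ω = cfc Real.log ω := by
  rw [hω.cfc_eq, matLog, dif_pos hω]
  rfl

lemma trXlogX_eq_sum (hγ : γ.IsHermitian) :
    trXlogX γ = ∑ i, hγ.eigenvalues i * Real.log (hγ.eigenvalues i) :=
  dif_pos hγ

lemma relEntropy_self (hγ : γ.IsHermitian) : relEntropy γ γ = 0 := by
  have hfinite := finite_real_spectrum (A := γ)
  have hmul : γ * cfc Real.log γ = cfc (fun x => x * Real.log x) γ := by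
    rw [cfc_mul (fun x => x) Real.log γ (hg := hfinite.continuousOn _), cfc_id' ℝ γ]
  rw [relEntropy, matLog_eq_cfc_s2 hγ, hmul, hγ.cfc_eq, hγ.trace_cfc, Complex.ofReal_re,
    trXlogX_eq_sum hγ, sub_self]

lemma relEntropy_sub_trace_add_trace (hγ : γ.IsHermitian) (hω : ω.PosDef) :
    relEntropy γ ω - γ.trace.re + ω.trace.re =
      ∑ j, ∑ i, Complex.normSq (hγ.eigenbasisOverlap hω.1 j i) *
        (hω.1.eigenvalues j * klFun (hγ.eigenvalues i / hω.1.eigenvalues j)) := by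
  set c := fun j i => Complex.normSq (hγ.eigenbasisOverlap hω.1 j i)
  have hW := hγ.eigenbasisOverlap_mem_unitaryGroup hω.1
  have hcross : (γ * matLog ω).trace.re = ∑ j, ∑ i, c j i *
      (hγ.eigenvalues i * Real.log (hω.1.eigenvalues j)) := by
    conv_lhs => rw [hγ.spectral_theorem, matLog_eq_cfc_s2 hω.1, hω.1.cfc_eq]
    exact congrArg Complex.re (hγ.trace_cfc_mul_cfc hω.1 id Real.log)
  have hxlogx :
      trXlogX γ = ∑ j, ∑ i, c j i * (hγ.eigenvalues i * Real.log (hγ.eigenvalues i)) := by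
    simp only [trXlogX_eq_sum hγ, Finset.sum_comm (γ := Fin n), ← Finset.sum_mul,
      c, sum_normSq_col_of_mem_unitaryGroup hW, one_mul]
  have htrγ : γ.trace.re = ∑ j, ∑ i, c j i * hγ.eigenvalues i := by
    simp only [hγ.re_trace_eq_sum, Finset.sum_comm (γ := Fin n), ← Finset.sum_mul,
      c, sum_normSq_col_of_mem_unitaryGroup hW, one_mul]
  have htrω : ω.trace.re = ∑ j, ∑ i, c j i * hω.1.eigenvalues j := by
    simp only [hω.1.re_trace_eq_sum, ← Finset.sum_mul, c, sum_normSq_row_of_mem_unitaryGroup hW,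
      one_mul]
  simp only [mul_klFun_div _ (hω.eigenvalues_pos _).ne', mul_add, mul_sub,
    Finset.sum_add_distrib, Finset.sum_sub_distrib]
  rw [relEntropy, hcross, hxlogx, htrγ, htrω]

lemma klein_summand_nonneg (hγ : γ.PosSemidef) (hω : ω.PosDef) (j i : Fin n) :
    0 ≤ Complex.normSq (hγ.1.eigenbasisOverlap hω.1 j i) *
      (hω.1.eigenvalues j * klFun (hγ.1.eigenvalues i / hω.1.eigenvalues j)) :=
  mul_nonneg (Complex.normSq_nonneg _) <| mul_nonneg (hω.eigenvalues_pos j).le <|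
    klFun_nonneg <| div_nonneg (hγ.eigenvalues_nonneg i) (hω.eigenvalues_pos j).le

theorem trace_sub_trace_le_relEntropy (hγ : γ.PosSemidef) (hω : ω.PosDef) :
    γ.trace.re - ω.trace.re ≤ relEntropy γ ω := by
  have hnonneg : 0 ≤ relEntropy γ ω - γ.trace.re + ω.trace.re := by
    rw [relEntropy_sub_trace_add_trace hγ.1 hω]
    exact Finset.sum_nonneg fun j _ => Finset.sum_nonneg fun i _ => klein_summand_nonneg hγ hω j i
  linarith

theorem eq_of_relEntropy_eq_trace_sub_trace (hγ : γ.PosSemidef) (hω : ω.PosDef)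
    (h : relEntropy γ ω = γ.trace.re - ω.trace.re) : γ = ω := by
  have hsum := relEntropy_sub_trace_add_trace hγ.1 hω
  rw [h, sub_sub_cancel_left, neg_add_cancel, eq_comm,
    Finset.sum_eq_zero_iff_of_nonneg fun j _ =>
      Finset.sum_nonneg fun i _ => klein_summand_nonneg hγ hω j i] at hsum
  refine hγ.1.eq_of_eigenvalues_eq_of_eigenbasisOverlap_ne_zero hω.1 fun j i hji => ?_
  have hq := (hω.eigenvalues_pos j).ne'
  have hterm := (Finset.sum_eq_zero_iff_of_nonneg fun i _ => klein_summand_nonneg hγ hω j i).mp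
    (hsum j (Finset.mem_univ j)) i (Finset.mem_univ i)
  rw [mul_eq_zero, mul_eq_zero, Complex.normSq_eq_zero, klFun_eq_zero_iff
    (div_nonneg (hγ.eigenvalues_nonneg i) (hω.eigenvalues_pos j).le), div_eq_one_iff_eq hq]
    at hterm
  tauto

lemma IsDensityMatrix.relEntropy_nonneg (hγ : IsDensityMatrix γ) (hω : ω.PosDef)
    (hω₁ : ω.trace = 1) : 0 ≤ relEntropy γ ω := by
  simpa [hγ.2, hω₁] using trace_sub_trace_le_relEntropy hγ.1 hω

lemma IsDensityMatrix.eq_of_relEntropy_eq_zero (hγ : IsDensityMatrix γ) (hω : ω.PosDef)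
    (hω₁ : ω.trace = 1) (h : relEntropy γ ω = 0) : γ = ω :=
  eq_of_relEntropy_eq_trace_sub_trace hγ.1 hω (by simp [h, hγ.2, hω₁])

end Klein

noncomputable def gibbsState {ι : Type*} [Fintype ι] [DecidableEq ι] (H : Matrix ι ι ℂ) :
    Matrix ι ι ℂ :=
  (((NormedSpace.exp H).trace.re)⁻¹ : ℝ) • NormedSpace.exp H

namespace Matrix.IsHermitian

variable {ι : Type*} [Fintype ι] [DecidableEq ι] {H : Matrix ι ι ℂ}

lemma trace_exp_s2 (hH : H.IsHermitian) :
    (NormedSpace.exp H).trace = ((∑ i, Real.exp (hH.eigenvalues i) : ℝ) : ℂ) := by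
  rw [hH.exp_eq_cfc, hH.trace_cfc]

lemma re_trace_exp_pos [Nonempty ι] (hH : H.IsHermitian) :
    0 < (NormedSpace.exp H).trace.re := by
  rw [hH.trace_exp_s2, Complex.ofReal_re]
  exact Finset.sum_pos (fun i _ => Real.exp_pos _) Finset.univ_nonempty

lemma trace_gibbsState [Nonempty ι] (hH : H.IsHermitian) : (gibbsState H).trace = 1 := by
  have hZ := hH.re_trace_exp_pos
  rw [hH.trace_exp_s2, Complex.ofReal_re] at hZ
  rw [gibbsState, trace_smul, hH.trace_exp_s2, Complex.ofReal_re, Complex.real_smul,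
    ← Complex.ofReal_mul, inv_mul_cancel₀ hZ.ne', Complex.ofReal_one]

lemma gibbsState_eq_cfc (hH : H.IsHermitian) :
    gibbsState H = cfc (fun x => ((NormedSpace.exp H).trace.re)⁻¹ * Real.exp x) H := by
  rw [cfc_const_mul _ _ _, hH.cfc_eq, ← hH.exp_eq_cfc, gibbsState]

open scoped MatrixOrder in
lemma posDef_gibbsState [Nonempty ι] (hH : H.IsHermitian) : (gibbsState H).PosDef := by
  have hZ := hH.re_trace_exp_pos
  rw [hH.gibbsState_eq_cfc]
  exact ((cfc_isStrictlyPositive_iff _ H).mpr fun x _ => by positivity).posDef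

lemma cfc_log_gibbsState [Nonempty ι] (hH : H.IsHermitian) :
    cfc Real.log (gibbsState H) = H - Real.log ((NormedSpace.exp H).trace.re) • 1 := by
  have hlog : (Real.log ∘ fun x => ((NormedSpace.exp H).trace.re)⁻¹ * Real.exp x) =
      fun x => x - Real.log ((NormedSpace.exp H).trace.re) := by
    funext x
    rw [Function.comp_apply, Real.log_mul (inv_ne_zero hH.re_trace_exp_pos.ne')
      (Real.exp_ne_zero x), Real.log_inv, Real.log_exp]
    ring
  rw [hH.gibbsState_eq_cfc, ← cfc_comp Real.log _ H
    (hg := ((finite_real_spectrum (A := H)).image _).continuousOn _), hlog,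
    cfc_sub _ _ H, cfc_id' ℝ H, cfc_const _ H, Algebra.algebraMap_eq_smul_one]

end Matrix.IsHermitian

lemma re_trace_mul_sub_trXlogX_eq {n : ℕ} [Nonempty (Fin n)] {H γ : Matrix (Fin n) (Fin n) ℂ}
    (hH : H.IsHermitian) (hγ : γ.trace = 1) :
    (γ * H).trace.re - trXlogX γ =
      Real.log ((NormedSpace.exp H).trace.re) - relEntropy γ (gibbsState H) := by
  rw [relEntropy, matLog_eq_cfc_s2 hH.posDef_gibbsState.1, hH.cfc_log_gibbsState, mul_sub,
    mul_smul_comm, Matrix.mul_one, trace_sub, trace_smul, hγ, Complex.sub_re, Complex.real_smul,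
    mul_one, Complex.ofReal_re]
  ring

/-- The Gibbs variational principle: `log Tr e^H` is the supremum over density
matrices `γ` of `Tr(γ H) − Tr(γ log γ)`, uniquely attained at the Gibbs state
`γ = e^H / Tr e^H`. -/
theorem gibbs_variational_principle {n : ℕ} (hn : 0 < n)
    (H : Matrix (Fin n) (Fin n) ℂ) (hH : H.IsHermitian) :
    IsGreatest {x : ℝ | ∃ γ, IsDensityMatrix γ ∧ x = ((γ * H).trace).re - trXlogX γ}
      (Real.log (((NormedSpace.exp H).trace).re)) ∧
    ∀ γ : Matrix (Fin n) (Fin n) ℂ, IsDensityMatrix γ →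
      ((γ * H).trace).re - trXlogX γ = Real.log (((NormedSpace.exp H).trace).re) →
      γ = ((((NormedSpace.exp H).trace).re)⁻¹ : ℝ) • NormedSpace.exp H := by
  have : Nonempty (Fin n) := ⟨⟨0, hn⟩⟩
  have hpd := hH.posDef_gibbsState
  have htr := hH.trace_gibbsState
  refine ⟨⟨⟨gibbsState H, ⟨hpd.posSemidef, htr⟩, ?_⟩, ?_⟩, fun γ hγ hopt => ?_⟩
  · rw [re_trace_mul_sub_trXlogX_eq hH htr, relEntropy_self hpd.1, sub_zero]
  · rintro _ ⟨γ, hγ, rfl⟩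
    linarith [re_trace_mul_sub_trXlogX_eq hH hγ.2, hγ.relEntropy_nonneg hpd htr]
  · have hrel : relEntropy γ (gibbsState H) = 0 := by
      linarith [re_trace_mul_sub_trXlogX_eq hH hγ.2]
    exact hγ.eq_of_relEntropy_eq_zero hpd htr hrel
end

section
/- Peierls–Bogoliubov inequality: for Hermitian matrices A and B on a finite-dimensional complex inner product space, log Tr e^{A+B} − log Tr e^{A} ≥ Tr(B e^{A}) / Tr(e^{A}). -/
/-!
Diagonalise `A = V diag(a) Vᴴ` and put `bᵢ = (Vᴴ B V)ᵢᵢ`, so that `Tr e^A = ∑ e^{aᵢ}` and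
`Tr (B e^A) = ∑ bᵢ e^{aᵢ}`. Peierls' inequality gives `∑ e^{aᵢ + bᵢ} ≤ Tr e^{A+B}`: if
`M = W diag(λ) Wᴴ`, the diagonal of `Vᴴ M V` is the image of `λ` under the doubly stochastic matrix
`|(Vᴴ W)ᵢⱼ|²`, so `∑ f((Vᴴ M V)ᵢᵢ) ≤ ∑ f(λⱼ)` for convex `f` by Jensen. Jensen's inequality for
`exp` with the Gibbs weights `e^{aᵢ} / ∑ e^{aⱼ}` then gives the claim.
-/

theorem Real.sum_mul_exp_div_le_log_sum_exp_add_sub_log_sum_exp {ι : Type*} [Fintype ι]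
    [Nonempty ι] (a b : ι → ℝ) :
    (∑ i, b i * Real.exp (a i)) / ∑ i, Real.exp (a i) ≤
      Real.log (∑ i, Real.exp (a i + b i)) - Real.log (∑ i, Real.exp (a i)) := by
  set Z := ∑ i, Real.exp (a i)
  have hZ : 0 < Z := Finset.sum_pos (fun i _ => Real.exp_pos _) Finset.univ_nonempty
  have jensen := convexOn_exp.map_sum_le (t := Finset.univ) (w := fun i => Real.exp (a i) / Z)
    (p := b) (fun i _ => by positivity) (by rw [← Finset.sum_div, div_self hZ.ne'])
    (fun i _ => Set.mem_univ _)
  rw [← Real.log_div (by positivity) hZ.ne', Real.le_log_iff_exp_le (by positivity)]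
  simpa only [smul_eq_mul, Finset.sum_div, Real.exp_add, div_mul_eq_mul_div, mul_comm (b _)]
    using jensen

namespace Matrix

variable {ι 𝕜 : Type*} [RCLike 𝕜] [Fintype ι] [DecidableEq ι]

lemma mul_diagonal_mul_conjTranspose_apply_self (V : Matrix ι ι 𝕜) (d : ι → ℝ) (i : ι) :
    (V * diagonal (RCLike.ofReal ∘ d) * Vᴴ : Matrix ι ι 𝕜) i i =
      ((∑ j, ‖V i j‖ ^ 2 * d j : ℝ) : 𝕜) := by
  rw [mul_apply]
  simp only [mul_diagonal, conjTranspose_apply, Function.comp_apply, RCLike.ofReal_sum,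
    RCLike.ofReal_mul, RCLike.ofReal_pow, ← RCLike.mul_conj, RCLike.star_def]
  exact Finset.sum_congr rfl fun j _ => by ring

lemma sum_norm_sq_apply_eq_one {U : Matrix ι ι 𝕜} (hU : U ∈ unitaryGroup ι 𝕜) (i : ι) :
    ∑ j, ‖U i j‖ ^ 2 = 1 := by
  have h := U.mul_diagonal_mul_conjTranspose_apply_self (fun _ => 1) i
  simp only [Function.comp_def, RCLike.ofReal_one, diagonal_one, mul_one,
    ← star_eq_conjTranspose, Unitary.mul_star_self_of_mem hU, one_apply_eq] at h
  exact_mod_cast h.symm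

lemma sum_norm_sq_apply_eq_one' {U : Matrix ι ι 𝕜} (hU : U ∈ unitaryGroup ι 𝕜) (j : ι) :
    ∑ i, ‖U i j‖ ^ 2 = 1 := by
  simpa [norm_star] using sum_norm_sq_apply_eq_one (Unitary.star_mem hU) j

theorem sum_map_re_mul_diagonal_mul_conjTranspose_le {U : Matrix ι ι 𝕜}
    (hU : U ∈ unitaryGroup ι 𝕜) (d : ι → ℝ) {f : ℝ → ℝ} (hf : ConvexOn ℝ Set.univ f) :
    ∑ i, f (RCLike.re ((U * diagonal (RCLike.ofReal ∘ d) * Uᴴ : Matrix ι ι 𝕜) i i)) ≤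
      ∑ i, f (d i) :=
  calc ∑ i, f (RCLike.re ((U * diagonal (RCLike.ofReal ∘ d) * Uᴴ : Matrix ι ι 𝕜) i i))
      = ∑ i, f (∑ j, ‖U i j‖ ^ 2 • d j) := by
        simp only [mul_diagonal_mul_conjTranspose_apply_self, RCLike.ofReal_re, smul_eq_mul]
    _ ≤ ∑ i, ∑ j, ‖U i j‖ ^ 2 • f (d j) := Finset.sum_le_sum fun i _ =>
        hf.map_sum_le (fun j _ => by positivity) (sum_norm_sq_apply_eq_one hU i)
          (fun j _ => Set.mem_univ _)
    _ = ∑ j, f (d j) := by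
        simp only [smul_eq_mul]
        rw [Finset.sum_comm]
        simp only [← Finset.sum_mul, sum_norm_sq_apply_eq_one' hU, one_mul]

theorem IsHermitian.sum_map_re_conjTranspose_mul_mul_le {M : Matrix ι ι 𝕜} (hM : M.IsHermitian)
    {U : Matrix ι ι 𝕜} (hU : U ∈ unitaryGroup ι 𝕜) {f : ℝ → ℝ} (hf : ConvexOn ℝ Set.univ f) :
    ∑ i, f (RCLike.re ((Uᴴ * M * U) i i)) ≤ ∑ i, f (hM.eigenvalues i) := by
  set V : Matrix ι ι 𝕜 := ↑hM.eigenvectorUnitary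
  have hUV : Uᴴ * V ∈ unitaryGroup ι 𝕜 :=
    Submonoid.mul_mem _ (Unitary.star_mem hU) hM.eigenvectorUnitary.2
  have hconj : Uᴴ * M * U = Uᴴ * V * diagonal (RCLike.ofReal ∘ hM.eigenvalues) * (Uᴴ * V)ᴴ := by
    conv_lhs => rw [hM.spectral_theorem, Unitary.conjStarAlgAut_apply]
    simp only [conjTranspose_mul, conjTranspose_conjTranspose, star_eq_conjTranspose, V,
      Matrix.mul_assoc]
  rw [hconj]
  exact sum_map_re_mul_diagonal_mul_conjTranspose_le hUV _ hf

theorem IsHermitian.exp_eq_cfc_s9 {M : Matrix ι ι 𝕜} (hM : M.IsHermitian) :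
    NormedSpace.exp M = cfc Real.exp M := by
  set V : Matrix ι ι 𝕜 := ↑hM.eigenvectorUnitary
  have hV : V⁻¹ = star V := inv_eq_left_inv (Unitary.star_mul_self_of_mem hM.eigenvectorUnitary.2)
  rw [hM.cfc_eq, IsHermitian.cfc, Unitary.conjStarAlgAut_apply]
  conv_lhs => rw [hM.spectral_theorem, Unitary.conjStarAlgAut_apply]
  rw [← hV, exp_conj V _ ⟨Unitary.toUnits hM.eigenvectorUnitary, rfl⟩, exp_diagonal]
  congr 3
  funext i
  simp only [Pi.exp_def, Function.comp_apply, Real.exp_eq_exp_ℝ]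
  exact (NormedSpace.algebraMap_exp_comm (hM.eigenvalues i)).symm

theorem IsHermitian.trace_mul_cfc {M : Matrix ι ι 𝕜} (hM : M.IsHermitian) (N : Matrix ι ι 𝕜)
    (f : ℝ → ℝ) :
    (N * cfc f M).trace = ∑ i, ((hM.eigenvectorUnitary : Matrix ι ι 𝕜)ᴴ * N *
      (hM.eigenvectorUnitary : Matrix ι ι 𝕜)) i i * f (hM.eigenvalues i) := by
  rw [hM.cfc_eq, IsHermitian.cfc, Unitary.conjStarAlgAut_apply, ← Matrix.mul_assoc,
    trace_mul_cycle, ← Matrix.mul_assoc]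
  simp [trace, mul_diagonal, star_eq_conjTranspose]

theorem IsHermitian.trace_cfc_s9 {M : Matrix ι ι 𝕜} (hM : M.IsHermitian) (f : ℝ → ℝ) :
    (cfc f M).trace = ∑ i, (f (hM.eigenvalues i) : 𝕜) := by
  simpa [← star_eq_conjTranspose] using hM.trace_mul_cfc 1 f

theorem IsHermitian.re_trace_exp {M : Matrix ι ι 𝕜} (hM : M.IsHermitian) :
    RCLike.re (NormedSpace.exp M).trace = ∑ i, Real.exp (hM.eigenvalues i) := by
  simp only [hM.exp_eq_cfc_s9, hM.trace_cfc_s9, map_sum, RCLike.ofReal_re]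

theorem IsHermitian.re_trace_mul_exp {M : Matrix ι ι 𝕜} (hM : M.IsHermitian) (N : Matrix ι ι 𝕜) :
    RCLike.re (N * NormedSpace.exp M).trace = ∑ i, RCLike.re (((hM.eigenvectorUnitary :
      Matrix ι ι 𝕜)ᴴ * N * hM.eigenvectorUnitary) i i) * Real.exp (hM.eigenvalues i) := by
  simp only [hM.exp_eq_cfc_s9, hM.trace_mul_cfc, map_sum, RCLike.re_mul_ofReal]

theorem IsHermitian.re_conjTranspose_eigenvectorUnitary_mul_add_mul_apply_self
    {M : Matrix ι ι 𝕜} (hM : M.IsHermitian) (N : Matrix ι ι 𝕜) (i : ι) :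
    RCLike.re (((hM.eigenvectorUnitary : Matrix ι ι 𝕜)ᴴ * (M + N) * hM.eigenvectorUnitary) i i) =
      hM.eigenvalues i + RCLike.re (((hM.eigenvectorUnitary : Matrix ι ι 𝕜)ᴴ * N *
        hM.eigenvectorUnitary) i i) := by
  have hdiag := hM.conjStarAlgAut_star_eigenvectorUnitary
  rw [Unitary.conjStarAlgAut_apply, Unitary.coe_star, star_star, star_eq_conjTranspose] at hdiag
  rw [Matrix.mul_add, Matrix.add_mul, add_apply, hdiag, map_add]
  simp

end Matrix

/-- Peierls–Bogoliubov inequality: for Hermitian matrices `A` and `B`,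
`log Tr e^{A+B} − log Tr e^A ≥ Tr(B e^A) / Tr(e^A)`. -/
theorem peierls_bogoliubov {n : ℕ} (A B : Matrix (Fin n) (Fin n) ℂ)
    (hA : A.IsHermitian) (hB : B.IsHermitian) :
    ((B * NormedSpace.exp A).trace).re / ((NormedSpace.exp A).trace).re ≤
      Real.log (((NormedSpace.exp (A + B)).trace).re) -
        Real.log (((NormedSpace.exp A).trace).re) := by
  cases isEmpty_or_nonempty (Fin n)
  · simp [Matrix.trace]
  have peierls := (hA.add hB).sum_map_re_conjTranspose_mul_mul_le hA.eigenvectorUnitary.2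
    convexOn_exp
  simp only [hA.re_conjTranspose_eigenvectorUnitary_mul_add_mul_apply_self] at peierls
  simp only [← RCLike.re_to_complex, hA.re_trace_mul_exp, hA.re_trace_exp,
    (hA.add hB).re_trace_exp]
  refine (Real.sum_mul_exp_div_le_log_sum_exp_add_sub_log_sum_exp _ _).trans ?_
  gcongr
end
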